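/- arXiv:2305.12560 — 2 statements merged into one kernel-verified Lean document; each statement's English description precedes it below -/
import Mathlib

section
/- Let u : [0,∞) → ℝ be bounded with 0 ≤ u(t) ≤ ρ, suppose u' ∈ L^2(0,∞) and u^{k_0} ∈ L^1(0,∞) for some integer k_0 ≥ 1. Then for any p > max(2, k_0), the function u^p belongs to W^{1,1}(0,∞), and consequently u(t) → 0 as t → ∞. -/
open MeasureTheory Filter Set Real

set_option maxHeartbeats 1000000

private lemma rpow_le_aux {ρ x : ℝ} (hρ : 0 < ρ) (hx : 0 ≤ x) (hxρ : x ≤ ρ)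
    {k : ℕ} (hk : 1 ≤ k) {q : ℝ} (hq : (k : ℝ) ≤ q) :
    x ^ q ≤ ρ ^ (q - k) * x ^ k := by
  have hk1 : (1 : ℝ) ≤ (k : ℝ) := by exact_mod_cast hk
  rcases eq_or_lt_of_le hx with h0 | h0
  · rw [← h0, Real.zero_rpow (by linarith), zero_pow (by omega), mul_zero]
  · have h1 : x ^ q = x ^ (q - k) * x ^ k := by
      rw [← Real.rpow_natCast x k, ← Real.rpow_add h0]
      ring_nf
    rw [h1]
    have := Real.rpow_le_rpow hx hxρ (by linarith : (0:ℝ) ≤ q - k)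
    exact mul_le_mul_of_nonneg_right this (by positivity)

/-- Let `u : [0,∞) → [0,ρ]` be differentiable with derivative `u'`, with `u' ∈ L²(0,∞)`
and `u^{k₀} ∈ L¹(0,∞)` for some integer `k₀ ≥ 1`. Then for any real `p > max(2, k₀)`,
`u^p ∈ W^{1,1}(0,∞)` (both `u^p` and its derivative `p u' u^{p-1}` are integrable),
and consequently `u(t) → 0` as `t → ∞`. -/
theorem upow_W11_and_tendsto_zero (ρ : ℝ) (hρ : 0 < ρ) (u u' : ℝ → ℝ)
    (hbound : ∀ t ≥ (0:ℝ), 0 ≤ u t ∧ u t ≤ ρ)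
    (hderiv : ∀ t ∈ Ioi (0:ℝ), HasDerivAt u (u' t) t)
    (hu'L2 : IntegrableOn (fun t => (u' t) ^ 2) (Ioi 0))
    (k₀ : ℕ) (hk₀ : 1 ≤ k₀)
    (huk : IntegrableOn (fun t => (u t) ^ k₀) (Ioi 0)) :
    (∀ p : ℝ, 2 < p → (k₀ : ℝ) < p →
      IntegrableOn (fun t => (u t) ^ p) (Ioi 0) ∧
      IntegrableOn (fun t => p * u' t * (u t) ^ (p - 1)) (Ioi 0)) ∧
    Tendsto u atTop (nhds 0) := by
  have hk1 : (1 : ℝ) ≤ (k₀ : ℝ) := by exact_mod_cast hk₀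
  have hucont : ContinuousOn u (Ioi 0) := fun t ht =>
    (hderiv t ht).continuousAt.continuousWithinAt
  have hu'meas : AEStronglyMeasurable u' (volume.restrict (Ioi 0)) := by
    have heq : ∀ᵐ t ∂(volume.restrict (Ioi (0:ℝ))), deriv u t = u' t := by
      filter_upwards [ae_restrict_mem measurableSet_Ioi] with t ht
      exact (hderiv t ht).deriv
    exact ((measurable_deriv u).aestronglyMeasurable).congr heq
  have main : ∀ p : ℝ, 2 < p → (k₀ : ℝ) < p →
      IntegrableOn (fun t => (u t) ^ p) (Ioi 0) ∧
      IntegrableOn (fun t => p * u' t * (u t) ^ (p - 1)) (Ioi 0) := by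
    intro p hp2 hpk
    have hp0 : (0:ℝ) < p := by linarith
    constructor
    · have humeas : AEStronglyMeasurable (fun t => u t ^ p) (volume.restrict (Ioi 0)) :=
        (hucont.rpow_const (fun t ht => Or.inr hp0.le)).aestronglyMeasurable measurableSet_Ioi
      have hg : Integrable (fun t => ρ ^ (p - (k₀:ℝ)) * u t ^ k₀)
          (volume.restrict (Ioi 0)) := huk.const_mul (ρ ^ (p - (k₀:ℝ)))
      refine hg.mono' humeas ?_
      filter_upwards [ae_restrict_mem measurableSet_Ioi] with t ht
      have hb := hbound t ht.le
      rw [Real.norm_eq_abs, abs_of_nonneg (Real.rpow_nonneg hb.1 p)]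
      exact rpow_le_aux hρ hb.1 hb.2 hk₀ hpk.le
    · have hmeas2 : AEStronglyMeasurable (fun t => p * u' t * u t ^ (p - 1))
          (volume.restrict (Ioi 0)) :=
        (aestronglyMeasurable_const.mul hu'meas).mul
          ((hucont.rpow_const (fun t ht => Or.inr (by linarith))).aestronglyMeasurable
            measurableSet_Ioi)
      have hg : Integrable
          (fun t => p/2 * (u' t)^2 + (p/2 * ρ ^ (2*p - 2 - (k₀:ℝ))) * u t ^ k₀)
          (volume.restrict (Ioi 0)) :=
        (hu'L2.const_mul (p/2)).add (huk.const_mul (p/2 * ρ ^ (2*p - 2 - (k₀:ℝ))))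
      refine hg.mono' hmeas2 ?_
      filter_upwards [ae_restrict_mem measurableSet_Ioi] with t ht
      have hb := hbound t ht.le
      have hnn : 0 ≤ u t ^ (p - 1) := Real.rpow_nonneg hb.1 _
      have hsq : (u t ^ (p-1))^2 = u t ^ (2*p - 2) := by
        rw [← Real.rpow_natCast (u t ^ (p-1)) 2, ← Real.rpow_mul hb.1]
        norm_num
        ring_nf
      have hdom : u t ^ (2*p - 2) ≤ ρ ^ (2*p - 2 - k₀) * u t ^ k₀ :=
        rpow_le_aux hρ hb.1 hb.2 hk₀ (by linarith)
      have habs : |p * u' t * u t ^ (p - 1)| ≤ p/2 * ((u' t)^2 + (u t ^ (p-1))^2) := by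
        rw [abs_mul, abs_mul, abs_of_pos hp0, abs_of_nonneg hnn]
        have h1 : |u' t| * u t ^ (p-1) ≤ ((u' t)^2 + (u t ^ (p-1))^2)/2 := by
          nlinarith [sq_nonneg (|u' t| - u t ^ (p-1)), sq_abs (u' t)]
        nlinarith
      rw [Real.norm_eq_abs]
      calc |p * u' t * u t ^ (p - 1)| ≤ p/2 * ((u' t)^2 + (u t ^ (p-1))^2) := habs
        _ = p/2 * (u' t)^2 + p/2 * (u t ^ (p-1))^2 := by ring
        _ ≤ p/2 * (u' t)^2 + (p/2 * ρ ^ (2*p - 2 - (k₀:ℝ))) * u t ^ k₀ := by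
            rw [hsq]; nlinarith [hdom]
  refine ⟨main, ?_⟩
  set m : ℕ := k₀ + 3 with hm
  have hm2 : (2:ℝ) < (m:ℝ) := by push_cast [hm]; linarith
  have hmk : (k₀:ℝ) < (m:ℝ) := by push_cast [hm]; linarith
  obtain ⟨hwint, hw'int⟩ := main (m:ℝ) hm2 hmk
  have hwint' : IntegrableOn (fun t => u t ^ m) (Ioi (0:ℝ)) := by
    simpa [Real.rpow_natCast] using hwint
  have hcast : ((m:ℝ) - 1) = ((m - 1 : ℕ) : ℝ) := by
    have : 1 ≤ m := by omega
    push_cast [this]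
    ring
  have hw' : IntegrableOn (fun t => (m:ℝ) * u t ^ (m - 1) * u' t) (Ioi (0:ℝ)) := by
    have : (fun t => (m:ℝ) * u t ^ (m - 1) * u' t)
        = (fun t => (m:ℝ) * u' t * u t ^ ((m:ℝ) - 1)) := by
      funext t
      rw [hcast, Real.rpow_natCast]
      ring
    rw [this]
    exact hw'int
  have key : ∀ t ≥ (1:ℝ), u t ^ m = u 1 ^ m + ∫ s in (1:ℝ)..t, (m:ℝ) * u s ^ (m - 1) * u' s := by
    intro t ht
    have hsub : uIcc (1:ℝ) t ⊆ Ioi 0 := by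
      rw [uIcc_of_le ht]
      intro x hx
      exact lt_of_lt_of_le one_pos hx.1
    have hFTC := intervalIntegral.integral_eq_sub_of_hasDerivAt
      (f := fun s => u s ^ m) (f' := fun s => (m:ℝ) * u s ^ (m - 1) * u' s)
      (fun x hx => (hderiv x (hsub hx)).pow m)
      ((hw'.mono_set hsub).intervalIntegrable)
    linarith [hFTC]
  have hIoi1 : IntegrableOn (fun s => (m:ℝ) * u s ^ (m - 1) * u' s) (Ioi (1:ℝ)) :=
    hw'.mono_set (Ioi_subset_Ioi one_pos.le)
  have hlim : Tendsto (fun t => ∫ s in (1:ℝ)..t, (m:ℝ) * u s ^ (m - 1) * u' s) atTop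
      (nhds (∫ s in Ioi (1:ℝ), (m:ℝ) * u s ^ (m - 1) * u' s)) :=
    intervalIntegral_tendsto_integral_Ioi 1 hIoi1 tendsto_id
  set L : ℝ := u 1 ^ m + ∫ s in Ioi (1:ℝ), (m:ℝ) * u s ^ (m - 1) * u' s with hL
  have hwlim : Tendsto (fun t => u t ^ m) atTop (nhds L) := by
    apply Tendsto.congr' _ ((hlim.const_add (u 1 ^ m)))
    filter_upwards [eventually_ge_atTop (1:ℝ)] with t ht
    exact (key t ht).symm
  have hL0 : 0 ≤ L := by
    apply ge_of_tendsto hwlim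
    filter_upwards [eventually_ge_atTop (1:ℝ)] with t ht
    exact pow_nonneg (hbound t (by linarith)).1 m
  have hLzero : L = 0 := by
    by_contra h
    have hLpos : 0 < L := lt_of_le_of_ne hL0 (Ne.symm h)
    have hev : ∀ᶠ t in atTop, L/2 ≤ u t ^ m :=
      hwlim.eventually (eventually_ge_nhds (by linarith : L/2 < L))
    obtain ⟨A, hA⟩ := eventually_atTop.mp hev
    have hsub : Ioi (max A 0) ⊆ Ioi (0:ℝ) := Ioi_subset_Ioi (le_max_right _ _)
    have hconst : IntegrableOn (fun _ : ℝ => L/2) (Ioi (max A 0)) := by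
      apply Integrable.mono' (hwint'.mono_set hsub) aestronglyMeasurable_const
      filter_upwards [ae_restrict_mem measurableSet_Ioi] with t ht
      rw [Real.norm_eq_abs, abs_of_pos (by linarith)]
      exact hA t (le_of_lt (lt_of_le_of_lt (le_max_left _ _) ht))
    rw [integrableOn_const_iff (C := L/2)] at hconst
    rcases hconst with h' | h'
    · simp at h'; linarith
    · rw [Real.volume_Ioi] at h'
      exact absurd h' (lt_irrefl _)
  rw [hLzero] at hwlim
  have hmne : ((m:ℝ))⁻¹ ≠ 0 := by positivity
  have hrt : Tendsto (fun t => (u t ^ m) ^ ((m:ℝ)⁻¹)) atTop (nhds 0) := by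
    have := hwlim.rpow_const (p := (m:ℝ)⁻¹) (Or.inr (by positivity))
    simpa [Real.zero_rpow hmne] using this
  apply Tendsto.congr' _ hrt
  filter_upwards [eventually_ge_atTop (0:ℝ)] with t ht
  have h0 := (hbound t ht).1
  rw [← Real.rpow_natCast (u t) m, ← Real.rpow_mul h0,
    mul_inv_cancel₀ (by positivity : (m:ℝ) ≠ 0), Real.rpow_one]
end

section
/- Suppose y : [0,∞) → ℝ is continuously differentiable, M : [0,∞) → [0,∞) is continuous with M(t) → ∞ as t → ∞, φ : [0,∞) → ℝ is continuous with φ(t) → 0 as t → ∞, and y'(t) ≤ M(t)(B − A·y(t)) + φ(t) for constants A > 0, B ≥ 0, with y(t) ≥ 0 for all t. Then limsup_{t→∞} y(t) ≤ B/A. -/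
open Filter Set

lemma aux_forward_invariant (f f' : ℝ → ℝ) (c t₀ : ℝ)
    (hf : ∀ t, HasDerivAt f (f' t) t)
    (h0 : f t₀ ≤ c)
    (hd : ∀ t, t₀ ≤ t → c ≤ f t → f' t ≤ 0) :
    ∀ t, t₀ ≤ t → f t ≤ c := by
  have hfc : Continuous f := by
    have : Differentiable ℝ f := fun t => (hf t).differentiableAt
    exact this.continuous
  intro t₁ ht₁
  by_contra hgt
  push_neg at hgt
  set S : Set ℝ := Icc t₀ t₁ ∩ f ⁻¹' Iic c with hS
  have hScl : IsClosed S := isClosed_Icc.inter (isClosed_Iic.preimage hfc)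
  have hSne : S.Nonempty := ⟨t₀, ⟨le_rfl, ht₁⟩, h0⟩
  have hSbdd : BddAbove S := ⟨t₁, fun r hr => hr.1.2⟩
  have hsmem : sSup S ∈ S := hScl.csSup_mem hSne hSbdd
  set s := sSup S with hs
  have hst₁ : s ≤ t₁ := hsmem.1.2
  have hslt : s < t₁ := lt_of_le_of_ne hst₁ (by
    intro h; rw [h] at hsmem; exact absurd hsmem.2 (not_le.mpr hgt))
  have hmono : AntitoneOn f (Icc s t₁) := by
    apply antitoneOn_of_deriv_nonpos (convex_Icc s t₁) hfc.continuousOn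
    · intro x _; exact (hf x).differentiableAt.differentiableWithinAt
    · intro x hx
      rw [interior_Icc] at hx
      have hxS : c ≤ f x := by
        by_contra hle
        push_neg at hle
        have : x ∈ S := ⟨⟨le_trans hsmem.1.1 hx.1.le, hx.2.le⟩, hle.le⟩
        exact absurd (le_csSup hSbdd this) (not_le.mpr hx.1)
      rw [(hf x).deriv]
      exact hd x (le_trans hsmem.1.1 hx.1.le) hxS
  have := hmono (left_mem_Icc.mpr hst₁) (right_mem_Icc.mpr hst₁) hst₁
  exact absurd (le_trans this hsmem.2) (not_le.mpr hgt)

/-- If `y' ≤ M(t)(B − A y) + φ(t)` with `y ≥ 0`, `M` continuous diverging to `∞`,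
`φ` continuous tending to `0`, `A > 0`, `B ≥ 0`, then `limsup_{t→∞} y(t) ≤ B/A`. -/
theorem limsup_le_of_diff_ineq (y y' M φ : ℝ → ℝ) (A B : ℝ)
    (hA : 0 < A) (hB : 0 ≤ B)
    (hy : ∀ t : ℝ, HasDerivAt y (y' t) t)
    (hy'cont : Continuous y')
    (hM : Continuous M) (hMpos : ∀ t, 0 ≤ M t) (hMdiv : Tendsto M atTop atTop)
    (hφ : Continuous φ) (hφ0 : Tendsto φ atTop (nhds 0))
    (hineq : ∀ t : ℝ, y' t ≤ M t * (B - A * y t) + φ t)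
    (hypos : ∀ t : ℝ, 0 ≤ y t) :
    Filter.limsup y atTop ≤ B / A := by
  have hcobdd : IsCoboundedUnder (· ≤ ·) atTop y :=
    (isBoundedUnder_of ⟨0, fun t => hypos t⟩ : IsBoundedUnder (· ≥ ·) atTop y).isCoboundedUnder_le
  apply le_of_forall_pos_le_add
  intro ε hε
  set c := B / A + ε with hc
  set δ := A * ε / 2 with hδ
  have hδpos : 0 < δ := by positivity
  have h1 : ∀ᶠ t in atTop, 1 ≤ M t := hMdiv.eventually_ge_atTop 1
  have h2 : ∀ᶠ t in atTop, φ t < δ := hφ0.eventually (gt_mem_nhds hδpos)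
  obtain ⟨T, hT⟩ := (h1.and h2).exists_forall_of_atTop
  -- key: derivative estimate when y t ≥ c and t ≥ T
  have hkey : ∀ t, T ≤ t → c ≤ y t → y' t ≤ -δ := by
    intro t ht hyt
    have hM1 : 1 ≤ M t := (hT t ht).1
    have hφδ : φ t < δ := (hT t ht).2
    have hAc : B - A * y t ≤ -(A * ε) := by
      have : A * c = B + A * ε := by
        rw [hc, mul_add, mul_div_cancel₀ _ (ne_of_gt hA)]
      nlinarith [mul_le_mul_of_nonneg_left hyt hA.le]
    have hMle : M t * (B - A * y t) ≤ -(A * ε) := by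
      calc M t * (B - A * y t) ≤ M t * (-(A * ε)) :=
            mul_le_mul_of_nonneg_left hAc (hMpos t)
        _ ≤ 1 * (-(A * ε)) := by
            apply mul_le_mul_of_nonpos_right hM1
            nlinarith
        _ = -(A * ε) := one_mul _
    have := hineq t
    rw [hδ]; nlinarith
  -- y must drop below c at some time t₀ ≥ T
  have hdrop : ∃ t₀, T ≤ t₀ ∧ y t₀ < c := by
    by_contra hcon
    push_neg at hcon
    set g : ℝ → ℝ := fun t => y t + δ * t with hg
    have hg' : ∀ t, HasDerivAt g (y' t + δ) t := fun t =>
      (hy t).add ((hasDerivAt_id t).const_mul δ |>.congr_deriv (by ring))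
    have hanti : AntitoneOn g (Ici T) := by
      apply antitoneOn_of_deriv_nonpos (convex_Ici T)
      · exact (Continuous.continuousOn (by
          have : Differentiable ℝ g := fun t => (hg' t).differentiableAt
          exact this.continuous))
      · intro x _; exact (hg' x).differentiableAt.differentiableWithinAt
      · intro x hx
        rw [interior_Ici] at hx
        rw [(hg' x).deriv]
        have := hkey x hx.le (hcon x hx.le)
        linarith
    obtain ⟨X, hXT, hXeq⟩ : ∃ X, T ≤ X ∧ δ * X = δ * T + (y T + 1) := by
      refine ⟨T + (y T + 1) / δ, ?_, ?_⟩
      · have h0 := hypos T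
        have h1 : 0 ≤ (y T + 1) / δ := by positivity
        linarith
      · field_simp
    have hXval : y X + δ * X ≤ y T + δ * T := hanti self_mem_Ici hXT hXT
    have : y X ≤ -1 := by linarith
    linarith [hypos X]
  obtain ⟨t₀, ht₀T, ht₀⟩ := hdrop
  have hinv : ∀ t, t₀ ≤ t → y t ≤ c := by
    apply aux_forward_invariant y y' c t₀ hy ht₀.le
    intro t ht hyt
    have := hkey t (le_trans ht₀T ht) hyt
    linarith
  have hev : ∀ᶠ t in atTop, y t ≤ B / A + ε :=
    eventually_atTop.mpr ⟨t₀, fun t ht => hinv t ht⟩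
  exact limsup_le_of_le hcobdd hev
end
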